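/- arXiv:1106.0774 — 6 statements merged into one kernel-verified Lean document; each statement's English description precedes it below -/
import Mathlib

section
/- If kQ/I is a gentle string algebra such that the quiver Q has neither loops nor oriented cycles, then there exists a coloring c of Q (a map c: Q_1 → S to a finite set such that the preimage of each color is a directed path) for which the ideal I_c generated by all monochromatic length-2 paths equals I. -/
/-!
Write `a ≺ b` when the length-two path "first `a`, then `b`" lies in `I`. Condition (c) says that
every arrow has at most one `≺`-successor and at most one `≺`-predecessor, and since `a ≺ b`
implies that `b` starts where `a` ends, an oriented-cycle-free quiver has no `≺`-cycles. Hence the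
arrows split into finitely many maximal `≺`-chains, each of which is a directed path. Colour every
arrow by the first arrow of its chain. A composable pair `a, b` of the same colour lies on one
chain; if `b` were not the immediate successor of `a` there, the chain would lead from the end of
`a` back to its start, giving an oriented cycle. So the monochromatic length-two paths are exactly
the relations.
-/

section Quiver

variable {V A : Type} (src tgt : A → V)

/-- A set of arrows forms a directed path if it can be listed (without repetition)
as a composable sequence of arrows. -/
def IsDirPathSet (s : Set A) : Prop :=
  ∃ l : List A, l.Nodup ∧ l.Chain' (fun a b => tgt a = src b) ∧ ∀ a, a ∈ l ↔ a ∈ s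

/-- A coloring of a quiver: a map on arrows whose fibers are directed paths. -/
def IsColoring {S : Type} (c : A → S) : Prop :=
  ∀ s : S, IsDirPathSet src tgt {a | c a = s}

/-- The quiver has neither loops nor oriented cycles. -/
def QuivAcyclic : Prop :=
  ∀ x : V, ¬ Relation.TransGen (fun x y => ∃ a, src a = x ∧ tgt a = y) x x

/-- `R` encodes a set of length-two relations: pairs `(a, b)` standing for the
path `ab` (first `b`, then `a`). -/
def ComposableRels (R : Set (A × A)) : Prop := ∀ p ∈ R, tgt p.2 = src p.1

/-- Condition (a) of a (gentle) string algebra: at most two arrows in and out of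
each vertex. -/
def GentleA : Prop := ∀ x : V, Set.ncard {a | tgt a = x} ≤ 2 ∧ Set.ncard {a | src a = x} ≤ 2

/-- Condition (b): for each arrow `b`, at most one arrow `a` with `ta = hb`, `ab ∉ I`,
and at most one arrow `c` with `hc = tb`, `bc ∉ I`. -/
def GentleB (R : Set (A × A)) : Prop :=
  ∀ b : A, {a | src a = tgt b ∧ (a, b) ∉ R}.Subsingleton ∧
    {c | tgt c = src b ∧ (b, c) ∉ R}.Subsingleton

/-- Condition (c): same as (b) but with `ab ∈ I`, `bc ∈ I`. -/
def GentleC (R : Set (A × A)) : Prop :=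
  ∀ b : A, {a | src a = tgt b ∧ (a, b) ∈ R}.Subsingleton ∧
    {c | tgt c = src b ∧ (b, c) ∈ R}.Subsingleton

/-- The set of length-two relations of the ideal `I_c` generated by the monochromatic
paths of length two, for a coloring `c`. -/
def monoRels {S : Type} (c : A → S) : Set (A × A) :=
  {p | tgt p.2 = src p.1 ∧ c p.2 = c p.1}

end Quiver

open Relation

section Chains

variable {α : Type*} {r : α → α → Prop}

theorem Relation.wellFounded_of_not_transGen_self [Finite α] (h : ∀ a, ¬ TransGen r a a) :
    WellFounded r :=
  haveI : Std.Irrefl (TransGen r) := ⟨h⟩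
  Subrelation.wf TransGen.single (Finite.wellFounded_of_trans_of_irrefl (TransGen r))

theorem List.IsChain.nodup_of_not_transGen_self {l : List α} (hl : l.IsChain r)
    (h : ∀ a, ¬ TransGen r a a) : l.Nodup :=
  haveI : Std.Irrefl (TransGen r) := ⟨h⟩
  (hl.imp fun _ _ => TransGen.single).pairwise.nodup

theorem Relation.ReflTransGen.eq_of_forall_not_rel {a b : α} (hab : ReflTransGen r a b)
    (hb : ∀ c, ¬ r c b) : a = b := by
  rcases hab.cases_tail with rfl | ⟨c, -, hcb⟩
  · rfl
  · exact absurd hcb (hb c)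

theorem Relator.LeftUnique.eq_of_reflTransGen (hr : Relator.LeftUnique r) {a x y : α}
    (hxa : ReflTransGen r x a) (hya : ReflTransGen r y a) (hx : ∀ c, ¬ r c x)
    (hy : ∀ c, ¬ r c y) : x = y := by
  rcases ReflTransGen.total_of_right_unique hr.flip (reflTransGen_swap.2 hxa) (reflTransGen_swap.2 hya)
    with hxy | hyx
  · exact (reflTransGen_swap.1 hxy).eq_of_forall_not_rel hx |>.symm
  · exact (reflTransGen_swap.1 hyx).eq_of_forall_not_rel hy

noncomputable def chainRoot (wf : WellFounded r) (a : α) : α :=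
  wf.min {b | ReflTransGen r b a} ⟨a, .refl⟩

variable (wf : WellFounded r)

theorem chainRoot_reflTransGen (a : α) : ReflTransGen r (chainRoot wf a) a :=
  wf.min_mem {b | ReflTransGen r b a} ⟨a, .refl⟩

theorem not_rel_chainRoot (b a : α) : ¬ r b (chainRoot wf a) := fun h =>
  wf.not_lt_min {c | ReflTransGen r c a} ((chainRoot_reflTransGen wf a).head h) h

theorem chainRoot_eq_iff (hr : Relator.LeftUnique r) {s : α} (hs : ∀ c, ¬ r c s) (a : α) :
    chainRoot wf a = s ↔ ReflTransGen r s a := by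
  refine ⟨?_, fun h => hr.eq_of_reflTransGen (chainRoot_reflTransGen wf a) h
    (not_rel_chainRoot wf · a) hs⟩
  rintro rfl
  exact chainRoot_reflTransGen wf a

theorem chainRoot_eq_of_rel (hr : Relator.LeftUnique r) {a b : α} (hab : r a b) :
    chainRoot wf a = chainRoot wf b :=
  ((chainRoot_eq_iff wf hr (not_rel_chainRoot wf · a) b).2
    ((chainRoot_reflTransGen wf a).tail hab)).symm

theorem exists_isChain_mem_iff_reflTransGen (wf' : WellFounded (flip r))
    (hr : Relator.RightUnique r) (s : α) :
    ∃ l : List α, l.head? = some s ∧ l.IsChain r ∧ ∀ a, a ∈ l ↔ ReflTransGen r s a := by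
  induction s using wf'.induction with
  | _ s ih =>
  by_cases hs : ∃ t, r s t
  · obtain ⟨t, hst⟩ := hs
    obtain ⟨l, hhead, hchain, hmem⟩ := ih t hst
    refine ⟨s :: l, rfl, List.isChain_cons.2 ⟨fun u hu => ?_, hchain⟩, fun a => ?_⟩
    · rw [hhead, Option.mem_some_iff] at hu
      exact hu ▸ hst
    rw [List.mem_cons, hmem]
    constructor
    · rintro (rfl | hta)
      exacts [.refl, hta.head hst]
    · intro hsa
      rcases hsa.cases_head with rfl | ⟨t', hst', ht'a⟩
      · exact .inl rfl
      · exact .inr (hr hst hst' ▸ ht'a)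
  · refine ⟨[s], rfl, List.isChain_singleton s, fun a => ?_⟩
    rw [List.mem_singleton]
    constructor
    · rintro rfl
      exact .refl
    · intro hsa
      rcases hsa.cases_head with rfl | ⟨t, hst, -⟩
      · rfl
      · exact absurd ⟨t, hst⟩ hs

end Chains

section Gentle

variable {V A : Type} {src tgt : A → V} {R : Set (A × A)}

def quivAdj (src tgt : A → V) (x y : V) : Prop := ∃ a, src a = x ∧ tgt a = y

-- `relSucc R a b` means that the path "first `a`, then `b`" is a relation; note the order of the pair.
def relSucc (R : Set (A × A)) (a b : A) : Prop := (b, a) ∈ R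

theorem ComposableRels.reflTransGen_quivAdj (hcomp : ComposableRels src tgt R) {a b : A}
    (h : ReflTransGen (relSucc R) a b) : ReflTransGen (quivAdj src tgt) (src a) (src b) :=
  h.lift src fun a _ hab => ⟨a, rfl, hcomp _ hab⟩

theorem ComposableRels.transGen_quivAdj (hcomp : ComposableRels src tgt R) {a b : A}
    (h : TransGen (relSucc R) a b) : TransGen (quivAdj src tgt) (src a) (src b) :=
  h.lift src fun a _ hab => ⟨a, rfl, hcomp _ hab⟩

theorem GentleC.leftUnique_relSucc (hc : GentleC src tgt R) (hcomp : ComposableRels src tgt R) :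
    Relator.LeftUnique (relSucc R) := fun _ _ c hac hbc =>
  (hc c).2 ⟨hcomp _ hac, hac⟩ ⟨hcomp _ hbc, hbc⟩

theorem GentleC.rightUnique_relSucc (hc : GentleC src tgt R) (hcomp : ComposableRels src tgt R) :
    Relator.RightUnique (relSucc R) := fun a _ _ hab hac =>
  (hc a).1 ⟨(hcomp _ hab).symm, hab⟩ ⟨(hcomp _ hac).symm, hac⟩

variable (hacyc : QuivAcyclic src tgt) (hcomp : ComposableRels src tgt R)
include hacyc hcomp

theorem QuivAcyclic.not_transGen_relSucc (a : A) : ¬ TransGen (relSucc R) a a := fun h =>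
  hacyc _ (hcomp.transGen_quivAdj h)

theorem QuivAcyclic.not_reflTransGen_relSucc {a b : A} (hba : tgt b = src a) :
    ¬ ReflTransGen (relSucc R) a b := fun h =>
  hacyc _ (TransGen.tail' (hcomp.reflTransGen_quivAdj h) ⟨b, rfl, hba⟩)

theorem QuivAcyclic.mem_of_reflTransGen_relSucc {a b : A} (hba : tgt b = src a)
    (h : ReflTransGen (relSucc R) b a) : (a, b) ∈ R := by
  rcases h.cases_head with rfl | ⟨m, hbm, hma⟩
  · exact absurd .refl (hacyc.not_reflTransGen_relSucc hcomp hba)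
  rcases reflTransGen_iff_eq_or_transGen.1 hma with rfl | hma
  · exact hbm
  -- a longer chain from `b` to `a` would make the quiver return from `tgt b` to `src a = tgt b`
  have hm : src m = src a := (hcomp _ hbm).symm.trans hba
  exact absurd (hm ▸ hcomp.transGen_quivAdj hma) (hacyc _)

variable (hc : GentleC src tgt R) (wf : WellFounded (relSucc R))
include hc

theorem isColoring_chainRoot [Finite A] : IsColoring src tgt (chainRoot wf) := by
  intro s
  by_cases hs : ∃ t, relSucc R t s
  · obtain ⟨t, hts⟩ := hs
    refine ⟨[], List.nodup_nil, List.isChain_nil, fun a => ?_⟩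
    simp only [List.not_mem_nil, Set.mem_ofPred_eq, false_iff]
    rintro rfl
    exact not_rel_chainRoot wf t a hts
  simp only [not_exists] at hs
  have wf' : WellFounded (flip (relSucc R)) := wellFounded_of_not_transGen_self fun a h =>
    hacyc.not_transGen_relSucc hcomp a (transGen_swap.1 h)
  obtain ⟨l, -, hchain, hmem⟩ :=
    exists_isChain_mem_iff_reflTransGen wf' (hc.rightUnique_relSucc hcomp) s
  refine ⟨l, hchain.nodup_of_not_transGen_self (hacyc.not_transGen_relSucc hcomp),
    hchain.imp fun _ _ hab => hcomp _ hab, fun a => ?_⟩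
  rw [hmem]
  exact (chainRoot_eq_iff wf (hc.leftUnique_relSucc hcomp) hs a).symm

theorem monoRels_chainRoot : monoRels src tgt (chainRoot wf) = R := by
  ext ⟨a, b⟩
  refine ⟨fun ⟨hba, hroot⟩ => ?_, fun h => ⟨hcomp _ h, chainRoot_eq_of_rel wf
    (hc.leftUnique_relSucc hcomp) h⟩⟩
  have hb := chainRoot_reflTransGen wf b
  rw [hroot] at hb
  rcases ReflTransGen.total_of_right_unique (hc.rightUnique_relSucc hcomp) hb (chainRoot_reflTransGen wf a)
    with hba' | hab'
  · exact hacyc.mem_of_reflTransGen_relSucc hcomp hba hba'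
  · exact absurd hab' (hacyc.not_reflTransGen_relSucc hcomp hba)

end Gentle

theorem gentle_is_colored_general {V A : Type} [Fintype A] (src tgt : A → V)
    (R : Set (A × A)) (hacyc : QuivAcyclic src tgt) (hcomp : ComposableRels src tgt R)
    (hc : GentleC src tgt R) :
    ∃ (S : Type) (_ : Fintype S) (c : A → S),
      IsColoring src tgt c ∧ monoRels src tgt c = R := by
  have wf := wellFounded_of_not_transGen_self (hacyc.not_transGen_relSucc hcomp)
  exact ⟨A, inferInstance, chainRoot wf, isColoring_chainRoot hacyc hcomp hc wf,
    monoRels_chainRoot hacyc hcomp hc wf⟩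

/-- if `kQ/I` is a gentle string algebra (conditions (a)-(c), with `I`
generated by the length-two paths recorded in `R`) and `Q` has neither loops nor
oriented cycles, then there is a coloring `c` of `Q` with `I_c = I`. -/
theorem gentle_is_colored {V A : Type} [Fintype V] [Fintype A] (src tgt : A → V)
    (R : Set (A × A)) (hacyc : QuivAcyclic src tgt) (hcomp : ComposableRels src tgt R)
    (ha : GentleA src tgt) (hb : GentleB src tgt R) (hc : GentleC src tgt R) :
    ∃ (S : Type) (_ : Fintype S) (c : A → S),
      IsColoring src tgt c ∧ monoRels src tgt c = R :=
  gentle_is_colored_general src tgt R hacyc hcomp hc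
end

section
/- Let Q be an acyclic quiver and kQ/I a string algebra. Then there exists a coloring c of Q and a surjective algebra homomorphism kQ/I_c → kQ/I, where kQ/I_c is a gentle string algebra. -/
/-! At each vertex `x` number the (at most two) arrows into `x` and the (at most two) arrows out
of `x` injectively by `Bool`, and glue incoming slot `i` to outgoing slot `i xor t`. For either
value of `t` this is a partial bijection between the two sides, and by condition (b) the pairs
`(a, b) ∉ I` meeting at `x` form a partial matching of the `2 × 2` slot grid, which cannot meet both
diagonals; so some `t` glues only pairs whose composite lies in `I`. Colour each arrow by its
maximal glued path. Acyclicity makes these paths simple and forces two composable arrows of one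
colour to be glued, so `I_c` is generated by the glued pairs: this gives `I_c ⊆ I`, condition (c)
for `I_c` because gluing is a partial bijection, and condition (b) because the two arrows after
`b` occupy different slots, so at most one of them is not glued to `b`. -/

namespace Relation

variable {α : Type*} {r : α → α → Prop}

theorem wellFounded_of_not_transGen_self_s1 [Finite α] (h : ∀ a, ¬ TransGen r a a) :
    WellFounded r :=
  haveI : Std.Irrefl (TransGen r) := ⟨h⟩
  Subrelation.wf (TransGen.single ·) (Finite.wellFounded_of_trans_of_irrefl _)

theorem ReflTransGen.total_of_left_unique (U : Relator.LeftUnique r) {a b c : α}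
    (ac : ReflTransGen r a c) (bc : ReflTransGen r b c) :
    ReflTransGen r a b ∨ ReflTransGen r b a := by
  have U' : Relator.RightUnique (Function.swap r) := fun _ _ _ hx hy => U hx hy
  simpa only [reflTransGen_swap, or_comm] using
    total_of_right_unique U' (reflTransGen_swap.mpr ac) (reflTransGen_swap.mpr bc)

theorem eqvGen_iff_of_unique (hr : Relator.RightUnique r) (hl : Relator.LeftUnique r) {a b : α} :
    EqvGen r a b ↔ ReflTransGen r a b ∨ ReflTransGen r b a := by
  refine ⟨fun h => ?_, fun h => h.elim (EqvGen.reflTransGen_le_eqvGen r _ _) fun h =>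
    (EqvGen.reflTransGen_le_eqvGen r _ _ h).symm⟩
  induction h with
  | rel _ _ h => exact .inl (.single h)
  | refl => exact .inl .refl
  | symm _ _ _ ih => exact ih.symm
  | trans _ _ _ _ _ ihab ihbc =>
    rcases ihab with hab | hba <;> rcases ihbc with hbc | hcb
    · exact .inl (hab.trans hbc)
    · exact ReflTransGen.total_of_left_unique hl hab hcb
    · exact ReflTransGen.total_of_right_unique hr hba hbc
    · exact .inr (hcb.trans hba)

theorem exists_isChain_reflTransGen [Finite α] (hr : Relator.RightUnique r)
    (hacyc : ∀ a, ¬ TransGen r a a) (a : α) :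
    ∃ l : List α, (a :: l).Nodup ∧ (a :: l).IsChain r ∧
      ∀ x, x ∈ a :: l ↔ ReflTransGen r a x := by
  have wf : WellFounded (flip r) :=
    wellFounded_of_not_transGen_self_s1 fun a h => hacyc a (transGen_swap.mp h)
  induction a using wf.induction with
  | _ a ih =>
  by_cases hsucc : ∃ b, r a b
  · obtain ⟨b, hab⟩ := hsucc
    obtain ⟨l, hnd, hch, hmem⟩ := ih b hab
    refine ⟨b :: l, List.nodup_cons.mpr ⟨fun ha => hacyc a (.head' hab ((hmem a).mp ha)), hnd⟩,
      List.isChain_cons_cons.mpr ⟨hab, hch⟩, fun x => ?_⟩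
    rw [List.mem_cons, hmem]
    refine ⟨fun h => h.elim (fun h => h ▸ .refl) (.head hab), fun h => ?_⟩
    rcases h.cases_head with rfl | ⟨c, hac, hcx⟩
    · exact .inl rfl
    · exact .inr (hr hab hac ▸ hcx)
  · refine ⟨[], List.nodup_singleton a, .singleton a, fun x => ?_⟩
    rw [List.mem_singleton]
    refine ⟨fun h => h ▸ .refl, fun h => ?_⟩
    rcases h.cases_head with rfl | ⟨c, hac, -⟩
    · rfl
    · exact (hsucc ⟨c, hac⟩).elim

theorem exists_isChain_eqvGen [Finite α] (hr : Relator.RightUnique r)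
    (hl : Relator.LeftUnique r) (hacyc : ∀ a, ¬ TransGen r a a) (a : α) :
    ∃ l : List α, l.Nodup ∧ l.IsChain r ∧ ∀ x, x ∈ l ↔ EqvGen r a x := by
  obtain ⟨s, has, hmin⟩ := (wellFounded_of_not_transGen_self_s1 hacyc).has_min
    {x | EqvGen r a x} ⟨a, .refl a⟩
  obtain ⟨l, hnd, hch, hmem⟩ := exists_isChain_reflTransGen hr hacyc s
  refine ⟨s :: l, hnd, hch, fun x => (hmem x).trans ⟨fun h => ?_, fun h => ?_⟩⟩
  · exact has.trans _ _ _ (EqvGen.reflTransGen_le_eqvGen r _ _ h)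
  · rcases (eqvGen_iff_of_unique hr hl).mp ((has.symm _ _).trans _ _ _ h) with h | h
    · exact h
    rcases reflTransGen_iff_eq_or_transGen.mp h with rfl | h
    · exact .refl
    obtain ⟨y, -, hys⟩ := TransGen.tail'_iff.mp h
    exact (hmin y (has.trans _ _ _ ((EqvGen.rel _ _ hys).symm _ _)) hys).elim

end Relation

theorem exists_bool_injOn_fibers {V A : Type} [Finite A] (f : A → V)
    (h : ∀ x, {a | f a = x}.ncard ≤ 2) :
    ∃ s : A → Bool, ∀ a a', f a = f a' → s a = s a' → a = a' := by
  have (x : V) : ∃ g : A → Bool, Set.InjOn g {a | f a = x} := by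
    have hfin := Set.toFinite {a | f a = x}
    obtain ⟨g, -, hg⟩ := hfin.exists_injOn_of_encard_le (t := (Set.univ : Set Bool)) (by
      rw [← hfin.cast_ncard_eq, Set.encard_univ, ENat.card_eq_coe_fintype_card, Fintype.card_bool]
      exact_mod_cast h x)
    exact ⟨g, hg⟩
  choose g hg using this
  refine ⟨fun a => g (f a) a, fun a a' he hs => hg (f a) rfl he.symm ?_⟩
  simpa only [he] using hs

section Chains

open Relation

variable {V A : Type} (src tgt : A → V) {r : A → A → Prop}

theorem transGen_arrow_of_transGen (hr : ∀ {b a}, r b a → tgt b = src a) {x y : A}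
    (h : TransGen r x y) : TransGen (fun u v => ∃ e, src e = u ∧ tgt e = v) (src x) (src y) :=
  h.lift src fun b _ hba => ⟨b, rfl, hr hba⟩

theorem QuivAcyclic.not_transGen_self (hacyc : QuivAcyclic src tgt)
    (hr : ∀ {b a}, r b a → tgt b = src a) (a : A) : ¬ TransGen r a a :=
  fun h => hacyc _ (transGen_arrow_of_transGen src tgt hr h)

theorem QuivAcyclic.rel_of_eqvGen (hacyc : QuivAcyclic src tgt)
    (hr : ∀ {b a}, r b a → tgt b = src a) (hru : Relator.RightUnique r)
    (hlu : Relator.LeftUnique r) {b a : A} (hba : tgt b = src a) (h : EqvGen r b a) :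
    r b a := by
  rcases (eqvGen_iff_of_unique hru hlu).mp h with h | h
  · rcases h.cases_head with rfl | ⟨a', hba', ha'a⟩
    · exact (hacyc _ (.single ⟨b, rfl, hba⟩)).elim
    rcases reflTransGen_iff_eq_or_transGen.mp ha'a with rfl | ha'a
    · exact hba'
    have := transGen_arrow_of_transGen src tgt hr ha'a
    rw [← hr hba', hba] at this
    exact (hacyc _ this).elim
  · have hpath : ReflTransGen (fun u v => ∃ e, src e = u ∧ tgt e = v) (src a) (src b) :=
      h.lift src fun x _ hx => ⟨x, rfl, hr hx⟩
    have := TransGen.tail' hpath ⟨b, rfl, rfl⟩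
    rw [hba] at this
    exact (hacyc _ this).elim

theorem isColoring_quotMk [Finite A] (hacyc : QuivAcyclic src tgt)
    (hr : ∀ {b a}, r b a → tgt b = src a) (hru : Relator.RightUnique r)
    (hlu : Relator.LeftUnique r) : IsColoring src tgt (Quot.mk r) := by
  intro s
  induction s using Quot.ind with
  | mk a =>
  obtain ⟨l, hnd, hch, hmem⟩ :=
    exists_isChain_eqvGen hru hlu (hacyc.not_transGen_self src tgt hr) a
  refine ⟨l, hnd, hch.imp fun _ _ => hr, fun x => (hmem x).trans ?_⟩
  exact ⟨fun h => Quot.eqvGen_sound (h.symm _ _), fun h => (Quot.eqvGen_exact h).symm _ _⟩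

theorem monoRels_quotMk (hacyc : QuivAcyclic src tgt)
    (hr : ∀ {b a}, r b a → tgt b = src a) (hru : Relator.RightUnique r)
    (hlu : Relator.LeftUnique r) : monoRels src tgt (Quot.mk r) = {p | r p.2 p.1} := by
  ext ⟨a, b⟩
  exact ⟨fun ⟨hba, h⟩ => hacyc.rel_of_eqvGen src tgt hr hru hlu hba (Quot.eqvGen_exact h),
    fun h => ⟨hr h, Quot.sound h⟩⟩

theorem gentleC_of_unique (hru : Relator.RightUnique r) (hlu : Relator.LeftUnique r) :
    GentleC src tgt {p | r p.2 p.1} :=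
  fun _ => ⟨fun _ h₁ _ h₂ => hru h₁.2 h₂.2, fun _ h₁ _ h₂ => hlu h₁.2 h₂.2⟩

end Chains

section Slots

variable {V A : Type} (src tgt : A → V) {hd tl : A → Bool}

/-- Arrows `b` and `a` are joined at `x = tgt b = src a` when the slot `hd b` of `b` among the
arrows into `x`, flipped by `twist x`, is the slot `tl a` of `a` among the arrows out of `x`. -/
def slotRel (hd tl : A → Bool) (twist : V → Bool) (b a : A) : Prop :=
  tgt b = src a ∧ xor (hd b) (twist (tgt b)) = tl a

variable {twist : V → Bool}

theorem slotRel_rightUnique (htl : ∀ a a', src a = src a' → tl a = tl a' → a = a') :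
    Relator.RightUnique (slotRel src tgt hd tl twist) :=
  fun _ _ _ ⟨h₁, e₁⟩ ⟨h₂, e₂⟩ => htl _ _ (h₁.symm.trans h₂) (e₁.symm.trans e₂)

theorem slotRel_leftUnique (hhd : ∀ b b', tgt b = tgt b' → hd b = hd b' → b = b') :
    Relator.LeftUnique (slotRel src tgt hd tl twist) := by
  rintro b b' a ⟨h₁, e₁⟩ ⟨h₂, e₂⟩
  have hx : tgt b = tgt b' := h₁.trans h₂.symm
  rw [← e₂, hx, Bool.xor_left_inj] at e₁
  exact hhd _ _ hx e₁

theorem gentleB_slotRel (hhd : ∀ b b', tgt b = tgt b' → hd b = hd b' → b = b')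
    (htl : ∀ a a', src a = src a' → tl a = tl a' → a = a') :
    GentleB src tgt {p | slotRel src tgt hd tl twist p.2 p.1} := by
  refine fun b => ⟨fun a₁ ⟨h₁, n₁⟩ a₂ ⟨h₂, n₂⟩ => ?_, fun c₁ ⟨h₁, n₁⟩ c₂ ⟨h₂, n₂⟩ => ?_⟩
  · have n₁ : tl a₁ ≠ xor (hd b) (twist (tgt b)) := fun e => n₁ ⟨h₁.symm, e.symm⟩
    have n₂ : tl a₂ ≠ xor (hd b) (twist (tgt b)) := fun e => n₂ ⟨h₂.symm, e.symm⟩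
    exact htl _ _ (h₁.trans h₂.symm)
      ((Bool.eq_not_iff.mpr n₁).trans (Bool.eq_not_iff.mpr n₂).symm)
  · have n₁ : xor (hd c₁) (twist (src b)) ≠ tl b := fun e => n₁ ⟨h₁, h₁ ▸ e⟩
    have n₂ : xor (hd c₂) (twist (src b)) ≠ tl b := fun e => n₂ ⟨h₂, h₂ ▸ e⟩
    have := (Bool.eq_not_iff.mpr n₁).trans (Bool.eq_not_iff.mpr n₂).symm
    rw [Bool.xor_left_inj] at this
    exact hhd _ _ (h₁.trans h₂.symm) this

theorem exists_twist {R : Set (A × A)} (hb : GentleB src tgt R)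
    (hhd : ∀ b b', tgt b = tgt b' → hd b = hd b' → b = b')
    (htl : ∀ a a', src a = src a' → tl a = tl a' → a = a') :
    ∃ twist : V → Bool, ∀ b a, slotRel src tgt hd tl twist b a → (a, b) ∈ R := by
  have (x : V) :
      ∃ t : Bool, ∀ b a, tgt b = x → src a = x → xor (hd b) t = tl a → (a, b) ∈ R := by
    by_contra! h
    obtain ⟨b₁, a₁, hb₁, ha₁, h₁, hR₁⟩ := h false
    obtain ⟨b₂, a₂, hb₂, ha₂, h₂, hR₂⟩ := h true
    have hiff : b₁ = b₂ ↔ a₁ = a₂ := by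
      constructor <;> rintro rfl
      · exact (hb b₁).1 ⟨ha₁.trans hb₁.symm, hR₁⟩ ⟨ha₂.trans hb₂.symm, hR₂⟩
      · exact (hb a₁).2 ⟨hb₁.trans ha₁.symm, hR₁⟩ ⟨hb₂.trans ha₂.symm, hR₂⟩
    have hslot : hd b₁ = hd b₂ ↔ tl a₁ = tl a₂ :=
      ⟨fun e => congrArg tl (hiff.mp (hhd _ _ (hb₁.trans hb₂.symm) e)),
        fun e => congrArg hd (hiff.mpr (htl _ _ (ha₁.trans ha₂.symm) e))⟩
    rw [← h₁, ← h₂, Bool.xor_false, Bool.xor_true, Bool.eq_not_iff] at hslot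
    exact iff_not_self hslot
  choose twist htwist using this
  exact ⟨twist, fun b a ⟨hba, h⟩ => htwist _ b a rfl hba.symm h⟩

end Slots

theorem string_algebra_quotient_of_gentle_general {V A : Type} [Fintype A]
    (src tgt : A → V) (R : Set (A × A)) (hacyc : QuivAcyclic src tgt)
    (ha : GentleA src tgt) (hb : GentleB src tgt R) :
    ∃ (S : Type) (_ : Fintype S) (c : A → S),
      IsColoring src tgt c ∧
      GentleB src tgt (monoRels src tgt c) ∧
      GentleC src tgt (monoRels src tgt c) ∧
      monoRels src tgt c ⊆ R := by
  obtain ⟨hd, hhd⟩ := exists_bool_injOn_fibers tgt fun x => (ha x).1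
  obtain ⟨tl, htl⟩ := exists_bool_injOn_fibers src fun x => (ha x).2
  obtain ⟨twist, hR⟩ := exists_twist src tgt hb hhd htl
  set r := slotRel src tgt hd tl twist
  have hr : ∀ {b a}, r b a → tgt b = src a := And.left
  have hru : Relator.RightUnique r := slotRel_rightUnique src tgt htl
  have hlu : Relator.LeftUnique r := slotRel_leftUnique src tgt hhd
  refine ⟨Quot r, Fintype.ofFinite _, Quot.mk r, isColoring_quotMk src tgt hacyc hr hru hlu, ?_⟩
  rw [monoRels_quotMk src tgt hacyc hr hru hlu]
  exact ⟨gentleB_slotRel src tgt hhd htl, gentleC_of_unique src tgt hru hlu,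
    fun p hp => hR _ _ hp⟩

/-- if `Q` is acyclic and `kQ/I` is a string algebra (conditions (a),(b),
with `I` generated by the length-two paths recorded in `R`), then there is a coloring
`c` of `Q` such that `kQ/I_c` is a gentle string algebra and such that `I_c ⊆ I`, i.e.
the identity on arrows induces a surjective algebra homomorphism `kQ/I_c → kQ/I`. -/
theorem string_algebra_quotient_of_gentle {V A : Type} [Fintype V] [Fintype A]
    (src tgt : A → V) (R : Set (A × A)) (hacyc : QuivAcyclic src tgt)
    (hcomp : ComposableRels src tgt R) (ha : GentleA src tgt) (hb : GentleB src tgt R) :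
    ∃ (S : Type) (_ : Fintype S) (c : A → S),
      IsColoring src tgt c ∧
      GentleB src tgt (monoRels src tgt c) ∧
      GentleC src tgt (monoRels src tgt c) ∧
      monoRels src tgt c ⊆ R :=
  string_algebra_quotient_of_gentle_general src tgt R hacyc ha hb
end

section
/- For a rank sequence r for β, the set Com°(β, r) of tuples (A_i) in Com_{n+1}(β) with rank A_i = r_i for all i ∈ [n] is a single orbit under the action of GL(β) = ∏ GL(β_i) by simultaneous change of basis. -/
/-!
Build the isomorphism of complexes vertex by vertex, keeping the invariant that `e i` maps
`ker A_i` onto `ker B_i`. Then `e i` induces `im A_i ≅ V_i ⧸ ker A_i ≅ V_i ⧸ ker B_i ≅ im B_i`.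
Since `im A_i ≤ ker A_{i+1}` and `im B_i ≤ ker B_{i+1}`, and kernels have equal dimensions by
rank–nullity, this isomorphism extends along the two flags to an `e (i+1)` that again maps
`ker A_{i+1}` onto `ker B_{i+1}`.
-/

/-- A rank sequence for the dimension vector `β` of the equioriented `A` quiver
`0 → 1 → 2 → ⋯`: `r i` is the rank bound on the arrow `i → i+1`, and adjacent
ranks fit into the dimension at each vertex. -/
def IsRankSeq (β r : ℕ → ℕ) : Prop :=
  r 0 ≤ β 0 ∧ ∀ i, r i + r (i + 1) ≤ β (i + 1)

open Module Submodule LinearMap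

section LinearEquivExtension

variable {k V V' : Type*} [Field k] [AddCommGroup V] [Module k V] [FiniteDimensional k V]
  [AddCommGroup V'] [Module k V'] [FiniteDimensional k V']

theorem LinearEquiv.exists_extend {U : Submodule k V} {U' : Submodule k V'} (φ : U ≃ₗ[k] U')
    (h : finrank k V = finrank k V') :
    ∃ e : V ≃ₗ[k] V', ∀ x : U, e x = φ x := by
  obtain ⟨C, hC⟩ := U.exists_isCompl
  obtain ⟨C', hC'⟩ := U'.exists_isCompl
  have hCC' : finrank k C = finrank k C' := by
    have := finrank_add_eq_of_isCompl hC
    have := finrank_add_eq_of_isCompl hC'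
    have := φ.finrank_eq
    omega
  refine ⟨(prodEquivOfIsCompl U C hC).symm ≪≫ₗ φ.prodCongr (LinearEquiv.ofFinrankEq C C' hCC')
    ≪≫ₗ prodEquivOfIsCompl U' C' hC', fun x => ?_⟩
  simp

theorem LinearEquiv.exists_extend_of_le {U K : Submodule k V} {U' K' : Submodule k V'}
    (hUK : U ≤ K) (hUK' : U' ≤ K') (φ : U ≃ₗ[k] U') (hK : finrank k K = finrank k K')
    (h : finrank k V = finrank k V') :
    ∃ e : V ≃ₗ[k] V', (∀ x : U, e x = φ x) ∧ K.map e.toLinearMap = K' := by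
  obtain ⟨ψ, hψ⟩ := LinearEquiv.exists_extend
    (comapSubtypeEquivOfLe hUK ≪≫ₗ φ ≪≫ₗ (comapSubtypeEquivOfLe hUK').symm) hK
  obtain ⟨e, he⟩ := LinearEquiv.exists_extend (U := K) (U' := K') ψ h
  refine ⟨e, fun x => ?_, ?_⟩
  · rw [he ⟨x, hUK x.2⟩, hψ ⟨⟨x, hUK x.2⟩, x.2⟩]
    rfl
  · have hcomp : e.toLinearMap ∘ₗ K.subtype = K'.subtype ∘ₗ ψ.toLinearMap := by
      ext x; exact he x
    rw [← map_subtype_top K, ← map_comp, hcomp, map_comp, ← range_eq_map, LinearEquiv.range,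
      map_subtype_top]

end LinearEquivExtension

section Complexes

variable {k V W V₁ W₁ : Type*} [Field k] [AddCommGroup V] [Module k V]
  [AddCommGroup W] [Module k W]
  [AddCommGroup V₁] [Module k V₁] [AddCommGroup W₁] [Module k W₁]

theorem LinearMap.finrank_ker_eq_of_finrank_range_eq (f : V →ₗ[k] V₁) (f' : W →ₗ[k] W₁)
    [FiniteDimensional k V] [FiniteDimensional k W] (h : finrank k V = finrank k W)
    (hr : finrank k (range f) = finrank k (range f')) :
    finrank k (ker f) = finrank k (ker f') := by
  have := f.finrank_range_add_finrank_ker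
  have := f'.finrank_range_add_finrank_ker
  omega

theorem LinearMap.exists_linearEquiv_comp_eq (f : V →ₗ[k] V₁) (f' : W →ₗ[k] W₁)
    [FiniteDimensional k V₁] [FiniteDimensional k W₁] (e : V ≃ₗ[k] W)
    (he : (ker f).map e.toLinearMap = ker f') {K : Submodule k V₁} {K' : Submodule k W₁}
    (hK : range f ≤ K) (hK' : range f' ≤ K') (hKK' : finrank k K = finrank k K')
    (h : finrank k V₁ = finrank k W₁) :
    ∃ e₁ : V₁ ≃ₗ[k] W₁, e₁.toLinearMap ∘ₗ f = f' ∘ₗ e.toLinearMap ∧ K.map e₁.toLinearMap = K' := by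
  let φ : range f ≃ₗ[k] range f' :=
    f.quotKerEquivRange.symm ≪≫ₗ Quotient.equiv _ _ e he ≪≫ₗ f'.quotKerEquivRange
  obtain ⟨e₁, he₁, hmap⟩ := LinearEquiv.exists_extend_of_le hK hK' φ hKK' h
  refine ⟨e₁, LinearMap.ext fun x => ?_, hmap⟩
  have := he₁ ⟨f x, mem_range_self f x⟩
  simp only [φ, LinearEquiv.trans_apply, quotKerEquivRange_symm_apply_image] at this
  simpa using this

end Complexes

theorem exists_seq_of_step {α : ℕ → Sort*} (P : ∀ i, α i → Prop)
    (R : ∀ i, α i → α (i + 1) → Prop) (h₀ : ∃ a, P 0 a)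
    (hstep : ∀ i a, P i a → ∃ b, P (i + 1) b ∧ R i a b) :
    ∃ a : ∀ i, α i, ∀ i, R i (a i) (a (i + 1)) := by
  obtain ⟨a₀, ha₀⟩ := h₀
  choose next hnext hR using hstep
  let s : ∀ i, {a // P i a} := fun i =>
    Nat.rec ⟨a₀, ha₀⟩ (fun i a => ⟨next i a.1 a.2, hnext i a.1 a.2⟩) i
  exact ⟨fun i => (s i).1, fun i => hR i (s i).1 (s i).2⟩

theorem exists_linearEquiv_of_complexes {k : Type*} [Field k] {V W : ℕ → Type*}
    [∀ i, AddCommGroup (V i)] [∀ i, Module k (V i)] [∀ i, FiniteDimensional k (V i)]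
    [∀ i, AddCommGroup (W i)] [∀ i, Module k (W i)] [∀ i, FiniteDimensional k (W i)]
    (f : ∀ i, V i →ₗ[k] V (i + 1)) (f' : ∀ i, W i →ₗ[k] W (i + 1))
    (hf : ∀ i, f (i + 1) ∘ₗ f i = 0) (hf' : ∀ i, f' (i + 1) ∘ₗ f' i = 0)
    (hdim : ∀ i, finrank k (V i) = finrank k (W i))
    (hrank : ∀ i, finrank k (range (f i)) = finrank k (range (f' i))) :
    ∃ e : ∀ i, V i ≃ₗ[k] W i,
      ∀ i, (e (i + 1)).toLinearMap ∘ₗ f i = f' i ∘ₗ (e i).toLinearMap := by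
  have hker i : finrank k (ker (f i)) = finrank k (ker (f' i)) :=
    finrank_ker_eq_of_finrank_range_eq _ _ (hdim i) (hrank i)
  have h₀ : ∃ e : V 0 ≃ₗ[k] W 0, (ker (f 0)).map e.toLinearMap = ker (f' 0) :=
    (LinearEquiv.exists_extend_of_le bot_le bot_le (LinearEquiv.ofSubsingleton _ _)
      (hker 0) (hdim 0)).imp fun _ he => he.2
  refine exists_seq_of_step
    (fun i (e : V i ≃ₗ[k] W i) => (ker (f i)).map e.toLinearMap = ker (f' i))
    (fun i e e₁ => e₁.toLinearMap ∘ₗ f i = f' i ∘ₗ e.toLinearMap) h₀ fun i e he => ?_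
  obtain ⟨e₁, hcomm, hmap⟩ := (f i).exists_linearEquiv_comp_eq (f' i) e he
    (range_le_ker_iff.mpr (hf i)) (range_le_ker_iff.mpr (hf' i)) (hker (i + 1)) (hdim (i + 1))
  exact ⟨e₁, hmap, hcomm⟩

theorem complexes_with_fixed_ranks_single_orbit_general {k : Type} [Field k] (β r : ℕ → ℕ)
    (A B : ∀ i : ℕ, Matrix (Fin (β (i + 1))) (Fin (β i)) k)
    (hA : ∀ i, A (i + 1) * A i = 0) (hB : ∀ i, B (i + 1) * B i = 0)
    (hrA : ∀ i, (A i).rank = r i) (hrB : ∀ i, (B i).rank = r i) :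
    ∃ g : ∀ i : ℕ, Matrix.GeneralLinearGroup (Fin (β i)) k,
      ∀ i, B i = (g (i + 1)).val * A i * ((g i)⁻¹).val := by
  obtain ⟨e, he⟩ := exists_linearEquiv_of_complexes (fun i => (A i).mulVecLin)
    (fun i => (B i).mulVecLin) (fun i => by rw [← Matrix.mulVecLin_mul, hA, Matrix.mulVecLin_zero])
    (fun i => by rw [← Matrix.mulVecLin_mul, hB, Matrix.mulVecLin_zero]) (fun _ => rfl)
    (fun i => (hrA i).trans (hrB i).symm)
  let g i : Matrix.GeneralLinearGroup (Fin (β i)) k :=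
    Matrix.GeneralLinearGroup.toLin.symm (LinearMap.GeneralLinearGroup.ofLinearEquiv (e i))
  have hg i : (g i).val.mulVecLin = (e i).toLinearMap := by
    rw [← Matrix.GeneralLinearGroup.coe_toLin, MulEquiv.apply_symm_apply]; rfl
  refine ⟨g, fun i => ?_⟩
  have hcomm : B i * (g i).val = (g (i + 1)).val * A i := by
    apply Matrix.toLin'.injective
    simp only [Matrix.toLin'_apply', Matrix.mulVecLin_mul, hg, he]
  rw [← hcomm, Matrix.mul_assoc, ← Units.val_mul, mul_inv_cancel, Units.val_one, Matrix.mul_one]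

/-- for a rank sequence `r` for `β`, the set `Com°(β, r)` of complexes
with `rank A_i = r_i` for all `i` is a single orbit under `GL(β)` acting by
simultaneous change of basis. -/
theorem complexes_with_fixed_ranks_single_orbit {k : Type} [Field k] (n : ℕ)
    (β r : ℕ → ℕ) (hβ : ∀ i, n + 1 ≤ i → β i = 0) (hr : IsRankSeq β r)
    (A B : ∀ i : ℕ, Matrix (Fin (β (i + 1))) (Fin (β i)) k)
    (hA : ∀ i, A (i + 1) * A i = 0) (hB : ∀ i, B (i + 1) * B i = 0)
    (hrA : ∀ i, (A i).rank = r i) (hrB : ∀ i, (B i).rank = r i) :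
    ∃ g : ∀ i : ℕ, Matrix.GeneralLinearGroup (Fin (β i)) k,
      ∀ i, B i = (g (i + 1)).val * A i * ((g i)⁻¹).val :=
  complexes_with_fixed_ranks_single_orbit_general β r A B hA hB hrA hrB
end

section
/- If r is a rank sequence for β and r' is obtained from r by decreasing one coordinate r_j by one (with r_j ≥ 1), then the orbit Com°(β, r') is contained in the Zariski closure of the orbit Com°(β, r). Consequently Com(β, r) = {A ∈ Com(β) : rank A_i ≤ r_i for all i} is the closure of Com°(β, r). -/
/-- Coordinates on the space of complexes with dimension vector `β`. -/
abbrev CIdx (β : ℕ → ℕ) : Type := Σ i : ℕ, Fin (β (i + 1)) × Fin (β i)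

/-- The coordinates of a tuple of matrices. -/
def coords {k : Type} [Field k] {β : ℕ → ℕ}
    (A : ∀ i, Matrix (Fin (β (i + 1))) (Fin (β i)) k) : CIdx β → k :=
  fun c => A c.1 c.2.1 c.2.2

/-- `A` lies in the Zariski closure of `T`: every polynomial function vanishing
identically on `T` vanishes at `A`. -/
def InZarClosure {k : Type} [Field k] {β : ℕ → ℕ}
    (T : Set (∀ i, Matrix (Fin (β (i + 1))) (Fin (β i)) k))
    (A : ∀ i, Matrix (Fin (β (i + 1))) (Fin (β i)) k) : Prop :=
  ∀ f : MvPolynomial (CIdx β) k,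
    (∀ B ∈ T, MvPolynomial.eval (coords B) f = 0) → MvPolynomial.eval (coords A) f = 0

/-- `Com°(β, r)`: complexes with exact ranks `r`. -/
def ComExact (k : Type) [Field k] (β r : ℕ → ℕ) :
    Set (∀ i, Matrix (Fin (β (i + 1))) (Fin (β i)) k) :=
  {A | (∀ i, A (i + 1) * A i = 0) ∧ ∀ i, (A i).rank = r i}

/-- `Com(β, r)`: complexes with ranks at most `r`. -/
def ComLe (k : Type) [Field k] (β r : ℕ → ℕ) :
    Set (∀ i, Matrix (Fin (β (i + 1))) (Fin (β i)) k) :=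
  {A | (∀ i, A (i + 1) * A i = 0) ∧ ∀ i, (A i).rank ≤ r i}

open Module Submodule Function

section LinearAlgebra

variable {K V W : Type*} [Field K] [AddCommGroup V] [Module K V] [AddCommGroup W] [Module K W]

theorem exists_linearIndependent_comp_of_le_finrank_span {ι : Type*} [Finite ι] (v : ι → V)
    {t : ℕ} (ht : t ≤ finrank K (span K (Set.range v))) :
    ∃ g : Fin t → ι, LinearIndependent K (v ∘ g) := by
  obtain ⟨κ, a, ha, hspan, hli⟩ := exists_linearIndependent' K v
  have : Finite κ := Finite.of_injective a ha
  have : Fintype κ := Fintype.ofFinite κ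
  have hcard : t ≤ Fintype.card κ := by
    rwa [← finrank_span_eq_card hli, hspan]
  obtain ⟨e⟩ := Function.Embedding.nonempty_of_card_le (α := Fin t) (β := κ)
    (by simpa using hcard)
  exact ⟨a ∘ e, hli.comp e e.injective⟩

theorem finrank_range_add_smulRight [FiniteDimensional K W] (f : V →ₗ[K] W) (φ : V →ₗ[K] K)
    {u : V} {w : W} (hu : f u = 0) (hφu : φ u ≠ 0) (hw : w ∉ LinearMap.range f) :
    finrank K (LinearMap.range (f + φ.smulRight w)) = finrank K (LinearMap.range f) + 1 := by
  set g := f + φ.smulRight w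
  have hwg : w ∈ LinearMap.range g :=
    ⟨(φ u)⁻¹ • u, by simp [g, hu, smul_smul, inv_mul_cancel₀ hφu]⟩
  have hrange : LinearMap.range g = LinearMap.range f ⊔ span K {w} := by
    refine le_antisymm ?_ (sup_le ?_ (span_le.mpr (Set.singleton_subset_iff.mpr hwg)))
    · rintro _ ⟨x, rfl⟩
      exact add_mem (mem_sup_left ⟨x, rfl⟩)
        (mem_sup_right (smul_mem _ _ (mem_span_singleton_self w)))
    · rintro _ ⟨x, rfl⟩
      have hfx : f x = g x - φ x • w := by simp [g]
      exact hfx ▸ sub_mem ⟨x, rfl⟩ (smul_mem _ _ hwg)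
  rw [hrange, finrank_sup_span_singleton hw]

theorem exists_finrank_range_add_smul_eq_succ [FiniteDimensional K V] [FiniteDimensional K W]
    (f : V →ₗ[K] W) (P : Submodule K V) (Q : Submodule K W)
    (hP : finrank K P < finrank K (LinearMap.ker f))
    (hQ : finrank K (LinearMap.range f) < finrank K Q) :
    ∃ g : V →ₗ[K] W, P ≤ LinearMap.ker g ∧ LinearMap.range g ≤ Q ∧
      ∀ t : K, t ≠ 0 →
        finrank K (LinearMap.range (f + t • g)) = finrank K (LinearMap.range f) + 1 := by
  obtain ⟨u, hu, huP⟩ := Set.not_subset.mp fun h => hP.not_ge (finrank_mono h)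
  obtain ⟨w, hwQ, hw⟩ := Set.not_subset.mp fun h => hQ.not_ge (finrank_mono h)
  obtain ⟨φ, hφu, hφP⟩ := exists_dual_map_eq_bot_of_notMem huP inferInstance
  refine ⟨φ.smulRight w, fun x hx => ?_, ?_, fun t ht => ?_⟩
  · have : φ x = 0 := (mem_bot K).mp (hφP ▸ mem_map_of_mem hx)
    simp [this]
  · rintro _ ⟨x, rfl⟩
    exact Q.smul_mem _ hwQ
  · have : t • φ.smulRight w = (t • φ).smulRight w := by ext; simp [smul_smul]
    rw [this]
    exact finrank_range_add_smulRight f _ hu (by simp [ht, hφu]) hw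

end LinearAlgebra

namespace Matrix

variable {K : Type*} [Field K] {m n : Type*} [Fintype n]

theorem exists_det_submatrix_ne_zero_of_lt_rank [Fintype m] (M : Matrix m n K) {s : ℕ}
    (hs : s < M.rank) :
    ∃ (f : Fin (s + 1) → m) (g : Fin (s + 1) → n), (M.submatrix f g).det ≠ 0 := by
  obtain ⟨g, hg⟩ := exists_linearIndependent_comp_of_le_finrank_span M.col
    (hs.trans_eq M.rank_eq_finrank_span_cols)
  have hrank : (M.submatrix id g).rank = s + 1 := by
    rw [← rank_transpose, LinearIndependent.rank_matrix (M := (M.submatrix id g)ᵀ) hg,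
      Fintype.card_fin]
  obtain ⟨f, hf⟩ := exists_linearIndependent_comp_of_le_finrank_span (M.submatrix id g).row
    (hrank.symm.le.trans_eq (rank_eq_finrank_span_row _))
  exact ⟨f, g, ((isUnit_iff_isUnit_det _).mp (linearIndependent_rows_iff_isUnit.mp hf)).ne_zero⟩

theorem rank_le_iff_forall_det_submatrix_eq_zero [Fintype m] (M : Matrix m n K) (s : ℕ) :
    M.rank ≤ s ↔
      ∀ (f : Fin (s + 1) → m) (g : Fin (s + 1) → n), (M.submatrix f g).det = 0 := by
  refine ⟨fun hs f g => ?_, fun h => ?_⟩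
  · by_contra hdet
    have := rank_submatrix_le M f g
    rw [rank_of_det_ne_zero hdet, Fintype.card_fin] at this
    omega
  · by_contra! hs
    obtain ⟨f, g, hfg⟩ := M.exists_det_submatrix_ne_zero_of_lt_rank hs
    exact hfg (h f g)

theorem mul_eq_zero_iff_range_le_ker {l : Type*} [Fintype m] (M : Matrix l m K) (N : Matrix m n K) :
    M * N = 0 ↔ LinearMap.range N.mulVecLin ≤ LinearMap.ker M.mulVecLin := by
  rw [LinearMap.range_le_ker_iff, ← mulVecLin_mul]
  refine ⟨fun h => by rw [h, mulVecLin_zero], fun h => ?_⟩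
  classical
  exact toLin'.injective (by rw [map_zero]; exact h)

theorem rank_add_finrank_ker_mulVecLin (M : Matrix m n K) :
    M.rank + finrank K (LinearMap.ker M.mulVecLin) = Fintype.card n := by
  rw [rank, LinearMap.finrank_range_add_finrank_ker, finrank_fintype_fun_eq_card]

end Matrix

abbrev MatTuple (k : Type) (β : ℕ → ℕ) : Type :=
  ∀ i, Matrix (Fin (β (i + 1))) (Fin (β i)) k

namespace InZarClosure

variable {k : Type} [Field k] {β : ℕ → ℕ} {S T : Set (MatTuple k β)} {A : MatTuple k β}

theorem of_mem (hA : A ∈ T) : InZarClosure T A := fun _ hf => hf A hA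

theorem trans (hA : InZarClosure S A) (hS : ∀ B ∈ S, InZarClosure T B) : InZarClosure T A :=
  fun f hf => hA f fun B hB => hS B hB f hf

theorem of_forall_add_smul_mem [Infinite k] (W : MatTuple k β)
    (h : ∀ t : k, t ≠ 0 → A + t • W ∈ T) : InZarClosure T A := by
  intro f hf
  let P : Polynomial k := MvPolynomial.aeval
    (fun c => Polynomial.C (coords A c) + Polynomial.X * Polynomial.C (coords W c)) f
  have hP : ∀ t, P.eval t = MvPolynomial.eval (coords (A + t • W)) f := by
    intro t
    rw [← Polynomial.coe_aeval_eq_eval, ← AlgHom.comp_apply, MvPolynomial.comp_aeval,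
      ← MvPolynomial.aeval_eq_eval]
    congr 2
    funext c
    simp only [Polynomial.coe_aeval_eq_eval, Polynomial.eval_add, Polynomial.eval_mul,
      Polynomial.eval_C, Polynomial.eval_X]
    rfl
  have hP0 : P = 0 := Polynomial.eq_zero_of_infinite_isRoot P <|
    (Set.finite_singleton 0).infinite_compl.mono fun t ht => (hP t).trans (hf _ (h t ht))
  simpa [hP0] using (hP 0).symm

end InZarClosure

section Closedness

variable {k : Type} [Field k] {β : ℕ → ℕ}

theorem eval_coords_sum_mul (A : MatTuple k β) (i : ℕ) (a : Fin (β (i + 2))) (b : Fin (β i)) :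
    MvPolynomial.eval (coords A)
        (∑ c, .X (⟨i + 1, (a, c)⟩ : CIdx β) * .X (⟨i, (c, b)⟩ : CIdx β)) =
      (A (i + 1) * A i) a b := by
  simp [Matrix.mul_apply, coords]

theorem eval_coords_det (A : MatTuple k β) (i : ℕ) {s : ℕ} (f : Fin s → Fin (β (i + 1)))
    (g : Fin s → Fin (β i)) :
    MvPolynomial.eval (coords A) (Matrix.of fun a b => .X (⟨i, (f a, g b)⟩ : CIdx β)).det =
      ((A i).submatrix f g).det := by
  rw [RingHom.map_det]
  congr 1
  ext a b
  simp [coords]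

theorem mem_comLe_of_inZarClosure {r : ℕ → ℕ} {T : Set (MatTuple k β)}
    (hT : T ⊆ ComLe k β r) {A : MatTuple k β} (hA : InZarClosure T A) : A ∈ ComLe k β r := by
  refine ⟨fun i => ?_, fun i => ?_⟩
  · ext a b
    have := hA _ fun B hB => (eval_coords_sum_mul B i a b).trans (by rw [(hT hB).1 i]; rfl)
    rwa [eval_coords_sum_mul] at this
  · rw [Matrix.rank_le_iff_forall_det_submatrix_eq_zero]
    intro f g
    have := hA _ fun B hB => (eval_coords_det B i f g).trans <|
      (Matrix.rank_le_iff_forall_det_submatrix_eq_zero _ _).mp ((hT hB).2 i) f g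
    rwa [eval_coords_det] at this

end Closedness

section Complexes

variable {k : Type} [Field k] {β : ℕ → ℕ}

theorem IsRankSeq.mono {r s : ℕ → ℕ} (hr : IsRankSeq β r) (hsr : s ≤ r) : IsRankSeq β s :=
  ⟨(hsr 0).trans hr.1, fun i => (add_le_add (hsr i) (hsr (i + 1))).trans (hr.2 i)⟩

/-- The image of the differential arriving at `V_j`, with the convention `A_{-1} = 0`. -/
def incomingRange (A : MatTuple k β) : (j : ℕ) → Submodule k (Fin (β j) → k)
  | 0 => ⊥
  | i + 1 => LinearMap.range (A i).mulVecLin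

theorem finrank_incomingRange_add_le {s : ℕ → ℕ} (hs : IsRankSeq β s) {A : MatTuple k β}
    (hA : ∀ i, (A i).rank ≤ s i) : ∀ j, finrank k (incomingRange A j) + s j ≤ β j
  | 0 => by rw [incomingRange, finrank_bot, zero_add]; exact hs.1
  | i + 1 => (Nat.add_le_add_right (hA i) _).trans (hs.2 i)

theorem add_smul_single_isComplex {A : MatTuple k β} (hA : ∀ i, A (i + 1) * A i = 0) {j : ℕ}
    {M : Matrix (Fin (β (j + 1))) (Fin (β j)) k}
    (hin : incomingRange A j ≤ LinearMap.ker M.mulVecLin)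
    (hout : LinearMap.range M.mulVecLin ≤ LinearMap.ker (A (j + 1)).mulVecLin) (t : k) (i : ℕ) :
    (A + t • (Pi.single j M : MatTuple k β)) (i + 1) *
      (A + t • (Pi.single j M : MatTuple k β)) i = 0 := by
  simp only [Pi.add_apply, Pi.smul_apply]
  rcases eq_or_ne j (i + 1) with rfl | hj
  · rw [Pi.single_eq_same, Pi.single_eq_of_ne (Nat.succ_ne_self i).symm, smul_zero, add_zero,
      Matrix.add_mul, hA, Matrix.smul_mul, (Matrix.mul_eq_zero_iff_range_le_ker _ _).mpr hin,
      smul_zero, zero_add]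
  rcases eq_or_ne j i with rfl | hj'
  · rw [Pi.single_eq_same, Pi.single_eq_of_ne (Nat.succ_ne_self j), smul_zero, add_zero,
      Matrix.mul_add, hA, Matrix.mul_smul, (Matrix.mul_eq_zero_iff_range_le_ker _ _).mpr hout,
      smul_zero, zero_add]
  rw [Pi.single_eq_of_ne hj.symm, Pi.single_eq_of_ne hj'.symm, smul_zero, smul_zero, add_zero,
    add_zero, hA]

theorem exists_add_smul_mem_comExact {s : ℕ → ℕ} (hs : IsRankSeq β s) {j : ℕ}
    (hj : 1 ≤ s j) {A : MatTuple k β} (hA : A ∈ ComExact k β (update s j (s j - 1))) :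
    ∃ W : MatTuple k β, ∀ t : k, t ≠ 0 → A + t • W ∈ ComExact k β s := by
  obtain ⟨hAc, hArk⟩ := hA
  have hrank_j : (A j).rank = s j - 1 := by simpa using hArk j
  have hrank_ne : ∀ i, i ≠ j → (A i).rank = s i := fun i hi => by simpa [hi] using hArk i
  have hrank_le : ∀ i, (A i).rank ≤ s i := fun i => by
    rcases eq_or_ne i j with rfl | hi
    · omega
    · exact (hrank_ne i hi).le
  have hin : finrank k (incomingRange A j) < finrank k (LinearMap.ker (A j).mulVecLin) := by
    have := finrank_incomingRange_add_le hs hrank_le j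
    have := (A j).rank_add_finrank_ker_mulVecLin
    rw [Fintype.card_fin] at this
    omega
  have hout : (A j).rank < finrank k (LinearMap.ker (A (j + 1)).mulVecLin) := by
    have := (A (j + 1)).rank_add_finrank_ker_mulVecLin
    rw [Fintype.card_fin, hrank_ne (j + 1) (Nat.succ_ne_self j)] at this
    have := hs.2 j
    omega
  obtain ⟨g, hgin, hgout, hgrank⟩ :=
    exists_finrank_range_add_smul_eq_succ (A j).mulVecLin _ _ hin hout
  have hg : (LinearMap.toMatrix' g).mulVecLin = g := Matrix.toLin'_toMatrix' g
  refine ⟨Pi.single j (LinearMap.toMatrix' g), fun t ht => ⟨add_smul_single_isComplex hAc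
    (by rwa [hg]) (by rwa [hg]) t, fun i => ?_⟩⟩
  rcases eq_or_ne i j with rfl | hij
  · simp only [Pi.add_apply, Pi.smul_apply, Pi.single_eq_same]
    rw [Matrix.rank, ← Matrix.toLin'_apply', map_add, map_smul, Matrix.toLin'_toMatrix',
      Matrix.toLin'_apply', hgrank t ht]
    change (A i).rank + 1 = s i
    omega
  · simp [Pi.single_eq_of_ne hij, hrank_ne i hij]

theorem inZarClosure_comExact_of_mem_comExact_update [Infinite k] {r : ℕ → ℕ}
    (hr : IsRankSeq β r) {j : ℕ} (hj : 1 ≤ r j) :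
    ∀ A ∈ ComExact k β (update r j (r j - 1)), InZarClosure (ComExact k β r) A :=
  fun _ hA =>
    let ⟨W, hW⟩ := exists_add_smul_mem_comExact hr hj hA
    InZarClosure.of_forall_add_smul_mem W hW

theorem inZarClosure_comExact_of_le [Infinite k] {r s : ℕ → ℕ} {n : ℕ} (hr : IsRankSeq β r)
    (hrn : ∀ i, n ≤ i → r i = 0) (hsr : s ≤ r) {A : MatTuple k β}
    (hA : A ∈ ComExact k β s) :
    InZarClosure (ComExact k β r) A := by
  obtain ⟨d, hd⟩ : ∃ d, ∑ i ∈ Finset.range n, (r i - s i) = d := ⟨_, rfl⟩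
  induction d using Nat.strong_induction_on generalizing s A with
  | _ d ih =>
  by_cases hsr' : s = r
  · exact .of_mem (hsr' ▸ hA)
  obtain ⟨j, hj⟩ : ∃ j, s j < r j := by
    by_contra! h
    exact hsr' (le_antisymm hsr h)
  have hjn : j < n := by
    by_contra! h
    have := hrn j h
    omega
  set s' := update s j (s j + 1)
  have hs'r : s' ≤ r := fun i => by
    rcases eq_or_ne i j with rfl | hi
    · simpa [s'] using hj
    · simpa [s', hi] using hsr i
  have hs' : update s' j (s' j - 1) = s := by simp [s']
  have hstep := inZarClosure_comExact_of_mem_comExact_update (hr.mono hs'r)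
    (by simp [s'] : 1 ≤ s' j) A (hs' ▸ hA)
  refine hstep.trans fun B hB => ih _ ?_ hs'r hB rfl
  rw [← hd]
  refine Finset.sum_lt_sum (fun i _ => Nat.sub_le_sub_left (?_ : s i ≤ s' i) _)
    ⟨j, Finset.mem_range.mpr hjn, by simp only [s', update_self]; omega⟩
  rcases eq_or_ne i j with rfl | hi
  · simp [s']
  · simp [s', hi]

end Complexes

/-- if `r'` is obtained from the rank sequence `r` by decreasing one
coordinate `r j ≥ 1` by one, then the orbit `Com°(β, r')` is contained in the Zariski
closure of `Com°(β, r)`; consequently `Com(β, r)` is the closure of `Com°(β, r)`. -/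
theorem orbit_closure_of_complexes {k : Type} [Field k] [IsAlgClosed k] (n : ℕ)
    (β : ℕ → ℕ) (hβ : ∀ i, n + 1 ≤ i → β i = 0) (r : ℕ → ℕ) (hr : IsRankSeq β r)
    (j : ℕ) (hj : 1 ≤ r j) :
    (∀ A ∈ ComExact k β (Function.update r j (r j - 1)),
      InZarClosure (ComExact k β r) A) ∧
    ComLe k β r = {A | InZarClosure (ComExact k β r) A} := by
  have hrn : ∀ i, n ≤ i → r i = 0 := fun i hi => by
    have := hr.2 i
    rw [hβ (i + 1) (by omega)] at this
    omega
  refine ⟨inZarClosure_comExact_of_mem_comExact_update hr hj, Set.ext fun A => ⟨fun hA => ?_,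
    mem_comLe_of_inZarClosure fun _ hB => ⟨hB.1, fun i => (hB.2 i).le⟩⟩⟩
  exact inZarClosure_comExact_of_le hr hrn (fun i => hA.2 i) (s := fun i => (A i).rank)
    ⟨hA.1, fun _ => rfl⟩
end

section
/- Let Q be a quiver with a coloring c having color set S, and for each color s let X_s, A_s, β^s, r^s be the vertices, arrows, dimension vector and rank sequence restricted to the path of color s. Then the variety Rep_{Q,c}(β, r) = {M ∈ Rep_{kQ/I_c}(β) : rank M(a) ≤ r(a) for all a ∈ Q_1} is isomorphic as a variety to the product over s ∈ S of the varieties of complexes Com_{|X_s|}(β^s, r^s). -/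
/-! Acyclicity forces the path of each color to visit every vertex at most once, so the only
monochromatic paths of length two are pairs of consecutive arrows of the same color. The relations
of `I_c` and the rank conditions therefore split color by color into the conditions defining the
varieties of complexes along the colored paths. -/

open scoped Classical

/-- A colored quiver, presented in standard form: a set of colors `S`, and for each
color `s` a directed path with `len s` arrows visiting the vertices
`vert s 0, vert s 1, …, vert s (len s)`.  The arrows of the quiver are the pairs
`(s, j)` with `j < len s`, and the coloring is the first projection; the associated
gentle string algebra is `kQ/I_c` where `I_c` is generated by the monochromatic
paths of length two. -/
structure CQuiv where
  V : Type
  S : Type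
  len : S → ℕ
  vert : S → ℕ → V

namespace CQuiv

variable (Q : CQuiv)

/-- The arrows of the colored quiver. -/
def Arrow : Type := Σ s : Q.S, Fin (Q.len s)

instance [Fintype Q.S] : Fintype Q.Arrow :=
  inferInstanceAs (Fintype (Σ s : Q.S, Fin (Q.len s)))

/-- Tail (source) of an arrow. -/
def tail (a : Q.Arrow) : Q.V := Q.vert a.1 (a.2 : ℕ)

/-- Head (target) of an arrow. -/
def head (a : Q.Arrow) : Q.V := Q.vert a.1 ((a.2 : ℕ) + 1)

/-- One step of the arrow relation on vertices. -/
def Step (x y : Q.V) : Prop := ∃ a : Q.Arrow, Q.tail a = x ∧ Q.head a = y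

/-- The quiver has neither loops nor oriented cycles. -/
def Acyclic : Prop := ∀ x : Q.V, ¬ Relation.TransGen Q.Step x x

/-- The color `s` passes through the vertex `x`. -/
def Through (x : Q.V) (s : Q.S) : Prop := ∃ j, j ≤ Q.len s ∧ Q.vert s j = x

/-- A lonely vertex: exactly one color passes through it. -/
def Lonely (x : Q.V) : Prop :=
  (∃ s, Q.Through x s) ∧ ∀ s s', Q.Through x s → Q.Through x s' → s = s'

/-- A coupled vertex: two distinct colors pass through it. -/
def Coupled (x : Q.V) : Prop := ∃ s s', s ≠ s' ∧ Q.Through x s ∧ Q.Through x s'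

/-- Total value of `r` on the arrows of color `s` entering `x` (this is `r(i(x,s))`,
with the convention `r ∅ = 0`, when the quiver is acyclic). -/
noncomputable def rIn (r : Q.Arrow → ℕ) (x : Q.V) (s : Q.S) : ℕ :=
  ∑ j : Fin (Q.len s), if Q.head ⟨s, j⟩ = x then r ⟨s, j⟩ else 0

/-- Total value of `r` on the arrows of color `s` leaving `x` (this is `r(o(x,s))`). -/
noncomputable def rOut (r : Q.Arrow → ℕ) (x : Q.V) (s : Q.S) : ℕ :=
  ∑ j : Fin (Q.len s), if Q.tail ⟨s, j⟩ = x then r ⟨s, j⟩ else 0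

variable (β : Q.V → ℕ)

/-- A rank sequence for `β`: `r(i(x,s)) + r(o(x,s)) ≤ β x` for all `(x, s)`. -/
def IsRankSeq (r : Q.Arrow → ℕ) : Prop :=
  ∀ (x : Q.V) (s : Q.S), Q.rIn r x s + Q.rOut r x s ≤ β x

/-- A maximal rank sequence (coordinate-wise partial order). -/
def IsMaxRankSeq (r : Q.Arrow → ℕ) : Prop :=
  Q.IsRankSeq β r ∧ ∀ r', Q.IsRankSeq β r' → (∀ a, r a ≤ r' a) → r' = r

/-- `lam ∈ Λ(Q,c,β,r)`: each `lam a` is a partition (written as an antitone function,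
`lam a i` being the `(i+1)`-st part) with at most `r a` nonzero parts. -/
def IsLam (r : Q.Arrow → ℕ) (lam : Q.Arrow → ℕ → ℕ) : Prop :=
  (∀ a, Antitone (lam a)) ∧ ∀ a i, r a ≤ i → lam a i = 0

/-- The `(i+1)`-st part of `lam(o(x,s))` (with `lam ∅ = 0`). -/
noncomputable def outPart (lam : Q.Arrow → ℕ → ℕ) (x : Q.V) (s : Q.S) (i : ℕ) : ℕ :=
  ∑ j : Fin (Q.len s), if Q.tail ⟨s, j⟩ = x then lam ⟨s, j⟩ i else 0

/-- The `(i+1)`-st part of `lam(i(x,s))` (with `lam ∅ = 0`). -/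
noncomputable def inPart (lam : Q.Arrow → ℕ → ℕ) (x : Q.V) (s : Q.S) (i : ℕ) : ℕ :=
  ∑ j : Fin (Q.len s), if Q.head ⟨s, j⟩ = x then lam ⟨s, j⟩ i else 0

/-- The `(i+1)`-st entry of the rational weight
`λ(x,s) = (λ(o(x,s)), 0, …, 0, -λ(i(x,s)))` of `GL(β x)`. -/
noncomputable def wt (lam : Q.Arrow → ℕ → ℕ) (x : Q.V) (s : Q.S) (i : ℕ) : ℤ :=
  (Q.outPart lam x s i : ℤ) - (Q.inPart lam x s (β x - 1 - i) : ℤ)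

/-- The Cauchy (rectangle) criterion: there is `σ ∈ ℤ^{Q₀}` such that at every
coupled vertex `λ(x,s₁)_i + λ(x,s₂)_{β_x+1-i} = σ_x` for all `i`, and at every
lonely vertex `λ(x,s)_i = σ_x` for all `i`. -/
def CauchyCond (lam : Q.Arrow → ℕ → ℕ) : Prop :=
  ∃ σ : Q.V → ℤ, ∀ x : Q.V,
    (∀ s t, s ≠ t → Q.Through x s → Q.Through x t →
      ∀ i, i < β x → Q.wt β lam x s i + Q.wt β lam x t (β x - 1 - i) = σ x) ∧
    (Q.Lonely x → ∀ s, Q.Through x s → ∀ i, i < β x → Q.wt β lam x s i = σ x)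

/-- Membership in the semigroup `Λ_SI(Q, c, β, r)`. -/
def InLamSI (r : Q.Arrow → ℕ) (lam : Q.Arrow → ℕ → ℕ) : Prop :=
  Q.IsLam r lam ∧ Q.CauchyCond β lam

/-- Labeled simple roots `α_i^{(x,s)}`: triples `(x, s, i)`. -/
def Root : Type := Q.V × Q.S × ℕ

/-- A valid labeled simple root: `s` passes through `x` and `1 ≤ i ≤ β x - 1`. -/
def IsRoot (p : Q.Root) : Prop :=
  Q.Through p.1 p.2.1 ∧ 1 ≤ p.2.2 ∧ p.2.2 + 1 ≤ β p.1

/-- Edges of the partition equivalence graph: a non-colored edge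
`α_i^{(x,s₁)} — α_{β_x-i}^{(x,s₂)}` at each coupled vertex, and for each arrow `a`
of color `s` a colored edge `α_i^{(ta,s)} — α_{β_{ha}-i}^{(ha,s)}`, `1 ≤ i ≤ r a - 1`. -/
def AdjRaw (r : Q.Arrow → ℕ) (p q : Q.Root) : Prop :=
  (Q.IsRoot β p ∧ Q.IsRoot β q) ∧
    ((p.1 = q.1 ∧ p.2.1 ≠ q.2.1 ∧ p.2.2 + q.2.2 = β p.1) ∨
     (∃ a : Q.Arrow, a.1 = p.2.1 ∧ a.1 = q.2.1 ∧ Q.tail a = p.1 ∧ Q.head a = q.1 ∧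
       p.2.2 + 1 ≤ r a ∧ p.2.2 + q.2.2 = β q.1))

/-- Adjacency in the partition equivalence graph `PEG(Q, c, β, r)`. -/
def PegAdj (r : Q.Arrow → ℕ) (p q : Q.Root) : Prop :=
  Q.AdjRaw β r p q ∨ Q.AdjRaw β r q p

/-- Two roots lie in the same connected component of the PEG. -/
def PegConn (r : Q.Arrow → ℕ) : Q.Root → Q.Root → Prop :=
  Relation.ReflTransGen (Q.PegAdj β r)

/-- The value `f_λ(α_i^{(x,s)}) = λ(x,s)_i - λ(x,s)_{i+1}` of a labeled simple root. -/
noncomputable def froot (lam : Q.Arrow → ℕ → ℕ) (p : Q.Root) : ℤ :=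
  Q.wt β lam p.1 p.2.1 (p.2.2 - 1) - Q.wt β lam p.1 p.2.1 p.2.2

/-- An endpoint of the PEG: a valid root with at most one neighbor. -/
def IsEndpoint (r : Q.Arrow → ℕ) (p : Q.Root) : Prop :=
  Q.IsRoot β p ∧ {q | Q.PegAdj β r p q}.Subsingleton

/-- The companion function `φ_u` of `u : Q₁ → ℕ`, evaluated at a root `e`: it equals
`u(o(x,s)) + u(i(x,s))`, `u(o(x,s))`, `u(i(x,s))` or `0` at endpoints of type
(Ia), (Ib), (Ic), (Id)/(II) respectively. -/
noncomputable def phi (r u : Q.Arrow → ℕ) (p : Q.Root) : ℕ :=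
  (if Q.Coupled p.1 ∧ p.2.2 = Q.rOut r p.1 p.2.1 then Q.rOut u p.1 p.2.1 else 0) +
  (if Q.Coupled p.1 ∧ p.2.2 + Q.rIn r p.1 p.2.1 = β p.1 then Q.rIn u p.1 p.2.1 else 0)

/-- The matching semigroup `U(Q, c, β, r)`: functions `u : Q₁ → ℕ` whose companion
function takes equal values at the two endpoints of each string of the PEG. -/
def USet (r : Q.Arrow → ℕ) : Set (Q.Arrow → ℕ) :=
  {u | ∀ p q, Q.IsEndpoint β r p → Q.IsEndpoint β r q → Q.PegConn β r p q →
    Q.phi β r u p = Q.phi β r u q}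

end CQuiv

namespace CQuiv

variable (Q : CQuiv) (β : Q.V → ℕ) (r : Q.Arrow → ℕ) (k : Type) [Field k]

/-- A point of the representation space: one matrix for each arrow `(s, j)`. -/
abbrev RepPoint : Type :=
  ∀ (s : Q.S) (j : ℕ), Matrix (Fin (β (Q.vert s (j + 1)))) (Fin (β (Q.vert s j))) k

/-- `Rep_{Q,c}(β, r)`: tuples of matrices annihilating all monochromatic length-two
paths (the relations of `I_c`) and with `rank M(a) ≤ r(a)` for every arrow. -/
def RepRankSet : Set (Q.RepPoint β k) :=
  {x | (∀ (s : Q.S) (j j' : ℕ), j < Q.len s → j' < Q.len s →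
          ∀ hc : Q.vert s (j + 1) = Q.vert s j',
            x s j' * (x s j).submatrix (Fin.cast (congrArg β hc).symm) id = 0) ∧
       ∀ (s : Q.S) (j : ℕ) (hj : j < Q.len s), (x s j).rank ≤ r ⟨s, ⟨j, hj⟩⟩}

/-- The variety of complexes `Com_{|X_s|}(β^s, r^s)` attached to the color `s`. -/
def ComAlong (s : Q.S) :
    Set (∀ j : ℕ, Matrix (Fin (β (Q.vert s (j + 1)))) (Fin (β (Q.vert s j))) k) :=
  {y | (∀ j, j + 1 < Q.len s → y (j + 1) * y j = 0) ∧
       ∀ (j : ℕ) (hj : j < Q.len s), (y j).rank ≤ r ⟨s, ⟨j, hj⟩⟩}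

end CQuiv

namespace CQuiv

variable {Q : CQuiv}

theorem transGen_step_vert (s : Q.S) {a b : ℕ} (hab : a < b) (hb : b ≤ Q.len s) :
    Relation.TransGen Q.Step (Q.vert s a) (Q.vert s b) := by
  have hsucc : ∀ i ∈ Set.Ico a b, Q.Step (Q.vert s i) (Q.vert s (Order.succ i)) := fun i hi =>
    ⟨⟨s, i, by grind⟩, rfl, rfl⟩
  exact (transGen_of_succ_of_lt _ hsucc hab).lift _ fun _ _ h => h

theorem Acyclic.vert_injOn (hQ : Q.Acyclic) (s : Q.S) :
    Set.InjOn (Q.vert s) (Set.Iic (Q.len s)) := by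
  intro a ha b hb hab
  by_contra hne
  rcases Nat.lt_or_gt_of_ne hne with h | h
  · exact hQ _ (hab ▸ transGen_step_vert s h hb)
  · exact hQ _ (hab ▸ transGen_step_vert s h ha)

variable (β : Q.V → ℕ) {k : Type} [Field k]

theorem Acyclic.monochromatic_relations_iff (hQ : Q.Acyclic) (x : Q.RepPoint β k) :
    (∀ (s : Q.S) (j j' : ℕ), j < Q.len s → j' < Q.len s →
        ∀ hc : Q.vert s (j + 1) = Q.vert s j',
          x s j' * (x s j).submatrix (Fin.cast (congrArg β hc).symm) id = 0) ↔
      ∀ s j, j + 1 < Q.len s → x s (j + 1) * x s j = 0 := by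
  constructor
  · intro h s j hj
    simpa using h s j (j + 1) (by omega) hj rfl
  · intro h s j j' hj hj' hc
    obtain rfl : j + 1 = j' := hQ.vert_injOn s (by simp; omega) (by simp; omega) hc
    simpa using h s j hj'

end CQuiv

theorem rep_is_product_of_complexes_general {Q : CQuiv} (β : Q.V → ℕ) (r : Q.Arrow → ℕ)
    (k : Type) [Field k] (hQ : Q.Acyclic) :
    Q.RepRankSet β r k = Set.pi Set.univ (fun s : Q.S => Q.ComAlong β r k s) := by
  ext x
  simp only [CQuiv.RepRankSet, CQuiv.ComAlong, Set.mem_ofPred_eq, Set.mem_pi, Set.mem_univ,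
    true_implies, forall_and]
  rw [hQ.monochromatic_relations_iff]

/-- for an acyclic colored quiver, the variety `Rep_{Q,c}(β, r)` is
(isomorphic to) the product over the colors `s` of the varieties of complexes
`Com_{|X_s|}(β^s, r^s)`: inside the ambient product space it *is* that product. -/
theorem rep_is_product_of_complexes {Q : CQuiv} (β : Q.V → ℕ) (r : Q.Arrow → ℕ)
    (k : Type) [Field k] (hQ : Q.Acyclic) (hr : Q.IsRankSeq β r) :
    Q.RepRankSet β r k = Set.pi Set.univ (fun s : Q.S => Q.ComAlong β r k s) :=
  rep_is_product_of_complexes_general β r k hQ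
end

section
/- The semigroup ring k[U] of the matching semigroup U(Q, c, β, r) is the ring of invariants of a polynomial ring k[X_a : a ∈ Q_1] under an action of a torus (k*)^S, where S is the set of strings of the PEG and (t_s) acts on the monomial ∏ X_a^{u(a)} by the character t_s^{φ_u(e_1^{(s)}) − φ_u(e_2^{(s)})}. Hence k[U] is the coordinate ring of an affine toric variety. -/
open scoped Classical

namespace CQuiv

variable (Q : CQuiv) (β : Q.V → ℕ)

/-- The (0/1) coefficient of `u a` in the linear function `φ_u(e)`. -/
noncomputable def cCoef (r : Q.Arrow → ℕ) (e : Q.Root) (a : Q.Arrow) : ℕ :=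
  (if Q.Coupled e.1 ∧ e.2.2 = Q.rOut r e.1 e.2.1 ∧ a.1 = e.2.1 ∧ Q.tail a = e.1
    then 1 else 0) +
  (if Q.Coupled e.1 ∧ e.2.2 + Q.rIn r e.1 e.2.1 = β e.1 ∧ a.1 = e.2.1 ∧ Q.head a = e.1
    then 1 else 0)

end CQuiv

/-! The torus `(kˣ)^T` acts diagonally on `k[X_a]`, so a polynomial is invariant iff each of
its monomials is. Since `φ_u(e) = ∑_a cCoef e a * u a`, the character of `∏ X_a^{u a}` is
trivial iff its exponents `φ_u(e₁) - φ_u(e₂)` vanish (an infinite field has no nonzero `n` with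
`gⁿ = 1` for all units `g`), i.e. iff `φ_u` agrees at the two endpoints of every string,
which is the defining condition of `U`. -/

open MvPolynomial

theorem Finset.prod_zpow_eq_zpow_sum {ι G : Type*} [CommGroup G] (s : Finset ι)
    (f : ι → ℤ) (g : G) : ∏ i ∈ s, g ^ f i = g ^ ∑ i ∈ s, f i := by
  classical
  induction s using Finset.induction with
  | empty => simp
  | insert i s hi ih => rw [Finset.prod_insert hi, Finset.sum_insert hi, zpow_add, ih]

theorem Fintype.forall_prod_zpow_eq_one_iff {ι G : Type*} [Fintype ι] [DecidableEq ι]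
    [CommGroup G] (n : ι → ℤ) :
    (∀ t : ι → G, ∏ s, t s ^ n s = 1) ↔ ∀ s (g : G), g ^ n s = 1 := by
  refine ⟨fun h s g => ?_, fun h t => Finset.prod_eq_one fun s _ => h s (t s)⟩
  have hs := h (Pi.mulSingle s g)
  rwa [Finset.prod_eq_single s (fun s' _ hs' => by simp [hs']) (by simp),
    Pi.mulSingle_eq_same] at hs

theorem Units.forall_zpow_eq_one_iff {K : Type*} [Field K] [Infinite K] (n : ℤ) :
    (∀ g : Kˣ, g ^ n = 1) ↔ n = 0 := by
  refine ⟨fun h => ?_, fun hn g => by rw [hn, zpow_zero]⟩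
  by_contra hn
  have hpos : 0 < n.natAbs := Int.natAbs_pos.mpr hn
  obtain ⟨x, hx⟩ :=
    Infinite.exists_notMem_finset (insert 0 (Polynomial.nthRootsFinset n.natAbs (1 : K)))
  rw [Finset.mem_insert, not_or, Polynomial.mem_nthRootsFinset hpos] at hx
  have hunit : Units.mk0 x hx.1 ^ n.natAbs = 1 := pow_natAbs_eq_one.mpr (h _)
  exact hx.2 (by simpa using congrArg Units.val hunit)

theorem Finsupp.prod_pow_prod_zpow {σ ι G : Type*} [Fintype σ] [Fintype ι] [CommGroup G]
    (t : ι → G) (d : ι → σ → ℤ) (v : σ →₀ ℕ) :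
    (v.prod fun a e => (∏ s, t s ^ d s a) ^ e) = ∏ s, t s ^ ∑ a, d s a * (v a : ℤ) := by
  simp_rw [Finsupp.prod_fintype v _ (fun _ => pow_zero _), ← Finset.prod_pow,
    ← zpow_natCast, ← zpow_mul]
  rw [Finset.prod_comm]
  exact Finset.prod_congr rfl fun s _ => Finset.prod_zpow_eq_zpow_sum _ _ _

namespace MvPolynomial

variable {σ R : Type*}

theorem aeval_C_mul_X_monomial [CommSemiring R] (c : σ → R) (v : σ →₀ ℕ) (b : R) :
    aeval (fun a => C (c a) * X a) (monomial v b) =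
      monomial v ((v.prod fun a e => c a ^ e) * b) := by
  rw [← C_mul_monomial, aeval_monomial, map_finsuppProd (C : R →+* MvPolynomial σ R)]
  simp only [mul_pow, ← C_pow]
  rw [Finsupp.prod_mul, monomial_eq, algebraMap_eq]
  ring

theorem coeff_aeval_C_mul_X [CommSemiring R] (c : σ → R) (f : MvPolynomial σ R)
    (w : σ →₀ ℕ) :
    coeff w (aeval (fun a => C (c a) * X a) f) = (w.prod fun a e => c a ^ e) * coeff w f := by
  classical
  induction f using MvPolynomial.induction_on' with
  | monomial v b =>
    rw [aeval_C_mul_X_monomial, coeff_monomial, coeff_monomial]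
    split_ifs with h
    · rw [h]
    · rw [mul_zero]
  | add p q hp hq => rw [map_add, coeff_add, coeff_add, hp, hq, mul_add]

theorem aeval_C_mul_X_eq_self_iff [CommSemiring R] [IsRightCancelMulZero R] (c : σ → R)
    (f : MvPolynomial σ R) :
    aeval (fun a => C (c a) * X a) f = f ↔ ∀ v ∈ f.support, (v.prod fun a e => c a ^ e) = 1 := by
  constructor
  · intro h v hv
    have hv' := congrArg (coeff v) h
    rwa [coeff_aeval_C_mul_X, mul_eq_right₀ (mem_support_iff.mp hv)] at hv'
  · intro h
    ext w
    rw [coeff_aeval_C_mul_X]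
    by_cases hw : w ∈ f.support
    · rw [h w hw, one_mul]
    · rw [notMem_support_iff.mp hw, mul_zero]

theorem torus_invariant_iff {ι K : Type*} [Fintype σ] [Fintype ι] [Field K] [Infinite K]
    (d : ι → σ → ℤ) (f : MvPolynomial σ K) :
    (∀ t : ι → Kˣ, aeval (fun a => C ((∏ s, t s ^ d s a : Kˣ) : K) * X a) f = f) ↔
      ∀ v ∈ f.support, ∀ s, ∑ a, d s a * (v a : ℤ) = 0 := by
  classical
  have hchar : ∀ (t : ι → Kˣ) (v : σ →₀ ℕ),
      (v.prod fun a e => ((∏ s, t s ^ d s a : Kˣ) : K) ^ e) = 1 ↔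
        ∏ s, t s ^ ∑ a, d s a * (v a : ℤ) = 1 := by
    intro t v
    rw [← Finsupp.prod_pow_prod_zpow, ← Units.val_eq_one]
    simp [Finsupp.prod]
  simp_rw [aeval_C_mul_X_eq_self_iff, hchar]
  constructor
  · intro h v hv s
    exact (Units.forall_zpow_eq_one_iff _).mp
      ((Fintype.forall_prod_zpow_eq_one_iff _).mp (fun t => h t v hv) s)
  · intro h t v hv
    exact (Fintype.forall_prod_zpow_eq_one_iff _).mpr
      (fun s => (Units.forall_zpow_eq_one_iff _).mpr (h v hv s)) t

end MvPolynomial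

namespace CQuiv

variable (Q : CQuiv) (β : Q.V → ℕ) (r : Q.Arrow → ℕ)

theorem mem_USet_iff_forall_phi_eq {T : Type*} (E1 E2 : T → Q.Root)
    (hend : ∀ t, Q.IsEndpoint β r (E1 t) ∧ Q.IsEndpoint β r (E2 t) ∧
      Q.PegConn β r (E1 t) (E2 t))
    (hcov : ∀ p q, Q.IsEndpoint β r p → Q.IsEndpoint β r q → p ≠ q →
      Q.PegConn β r p q → ∃ t, (E1 t = p ∧ E2 t = q) ∨ (E1 t = q ∧ E2 t = p))
    (u : Q.Arrow → ℕ) :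
    u ∈ Q.USet β r ↔ ∀ t, Q.phi β r u (E1 t) = Q.phi β r u (E2 t) := by
  refine ⟨fun hu t => hu _ _ (hend t).1 (hend t).2.1 (hend t).2.2, fun h p q hp hq hpq => ?_⟩
  obtain rfl | hne := eq_or_ne p q
  · rfl
  obtain ⟨t, ⟨rfl, rfl⟩ | ⟨rfl, rfl⟩⟩ := hcov p q hp hq hne hpq
  · exact h t
  · exact (h t).symm

variable [Fintype Q.S]

theorem sum_ite_fst_eq {M : Type*} [AddCommMonoid M] (f : Q.Arrow → M) (s : Q.S) :
    ∑ a : Q.Arrow, (if a.1 = s then f a else 0) = ∑ j : Fin (Q.len s), f ⟨s, j⟩ := by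
  refine (Fintype.sum_sigma (fun a : Σ s, Fin (Q.len s) => if a.1 = s then f a else 0)).trans ?_
  rw [Fintype.sum_eq_single s fun s' hs' => Finset.sum_eq_zero fun _ _ => if_neg hs']
  exact Finset.sum_congr rfl fun _ _ => if_pos rfl

theorem sum_cCoef_mul (u : Q.Arrow → ℕ) (e : Q.Root) :
    ∑ a, Q.cCoef β r e a * u a = Q.phi β r u e := by
  simp only [cCoef, phi, add_mul, ite_mul, one_mul, zero_mul, Finset.sum_add_distrib, ite_and,
    Finset.sum_ite_irrel, Finset.sum_const_zero, sum_ite_fst_eq]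
  rfl

theorem sum_cCoef_sub_mul (e₁ e₂ : Q.Root) (u : Q.Arrow → ℕ) :
    ∑ a, ((Q.cCoef β r e₁ a : ℤ) - Q.cCoef β r e₂ a) * u a =
      Q.phi β r u e₁ - Q.phi β r u e₂ := by
  rw [← sum_cCoef_mul, ← sum_cCoef_mul]
  push_cast
  simp only [sub_mul, Finset.sum_sub_distrib]

end CQuiv

theorem semigroup_ring_U_is_toric_general {Q : CQuiv} [Fintype Q.S]
    (β : Q.V → ℕ) (r : Q.Arrow → ℕ) (k : Type) [Field k] [IsAlgClosed k]
    (T : Type) [Fintype T] (E1 E2 : T → Q.Root)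
    (hend : ∀ t, Q.IsEndpoint β r (E1 t) ∧ Q.IsEndpoint β r (E2 t) ∧ E1 t ≠ E2 t ∧
      Q.PegConn β r (E1 t) (E2 t))
    (hcov : ∀ p q, Q.IsEndpoint β r p → Q.IsEndpoint β r q → p ≠ q →
      Q.PegConn β r p q → ∃ t, (E1 t = p ∧ E2 t = q) ∨ (E1 t = q ∧ E2 t = p)) :
    ∀ f : MvPolynomial Q.Arrow k,
      (∀ t : T → kˣ,
        MvPolynomial.aeval (fun a : Q.Arrow =>
          MvPolynomial.C
            ((↑(∏ s : T, t s ^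
              ((Q.cCoef β r (E1 s) a : ℤ) - (Q.cCoef β r (E2 s) a : ℤ))) : k)) *
          MvPolynomial.X a) f = f) ↔
      f ∈ Submodule.span k
        {mo : MvPolynomial Q.Arrow k | ∃ u : Q.Arrow →₀ ℕ,
          (↑u : Q.Arrow → ℕ) ∈ Q.USet β r ∧ mo = MvPolynomial.monomial u (1 : k)} := by
  intro f
  have hspan : {mo : MvPolynomial Q.Arrow k | ∃ u : Q.Arrow →₀ ℕ, ⇑u ∈ Q.USet β r ∧
      mo = monomial u 1} = (monomial · 1) '' {u | ⇑u ∈ Q.USet β r} := by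
    ext
    simp [eq_comm]
  have hU := Q.mem_USet_iff_forall_phi_eq β r E1 E2
    (fun t => ⟨(hend t).1, (hend t).2.1, (hend t).2.2.2⟩) hcov
  rw [torus_invariant_iff, hspan, ← restrictSupport_eq_span, mem_restrictSupport_iff]
  simp_rw [CQuiv.sum_cCoef_sub_mul, sub_eq_zero, Nat.cast_inj, ← hU]
  rfl

/-- `k[U]` is the invariant ring of the polynomial ring
`k[X_a : a ∈ Q₁]` under the torus `(kˣ)^S` (`S` = strings of the PEG, enumerated by
their endpoint pairs `E1 t`, `E2 t`), acting on a monomial `∏ X_a^{u a}` by the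
character `∏_s t_s^{φ_u(e₁^{(s)}) - φ_u(e₂^{(s)})}`: a polynomial is invariant iff it
is a `k`-linear combination of monomials whose exponent vectors lie in `U`.  Hence
`k[U]` is the coordinate ring of an affine toric variety. -/
theorem semigroup_ring_U_is_toric {Q : CQuiv} [Fintype Q.V] [Fintype Q.S]
    (β : Q.V → ℕ) (r : Q.Arrow → ℕ) (k : Type) [Field k] [IsAlgClosed k]
    (hQ : Q.Acyclic) (hmax : Q.IsMaxRankSeq β r)
    (T : Type) [Fintype T] (E1 E2 : T → Q.Root)
    (hend : ∀ t, Q.IsEndpoint β r (E1 t) ∧ Q.IsEndpoint β r (E2 t) ∧ E1 t ≠ E2 t ∧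
      Q.PegConn β r (E1 t) (E2 t))
    (hinj : ∀ t t', Q.PegConn β r (E1 t) (E1 t') → t = t')
    (hcov : ∀ p q, Q.IsEndpoint β r p → Q.IsEndpoint β r q → p ≠ q →
      Q.PegConn β r p q → ∃ t, (E1 t = p ∧ E2 t = q) ∨ (E1 t = q ∧ E2 t = p)) :
    ∀ f : MvPolynomial Q.Arrow k,
      (∀ t : T → kˣ,
        MvPolynomial.aeval (fun a : Q.Arrow =>
          MvPolynomial.C
            ((↑(∏ s : T, t s ^
              ((Q.cCoef β r (E1 s) a : ℤ) - (Q.cCoef β r (E2 s) a : ℤ))) : k)) *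
          MvPolynomial.X a) f = f) ↔
      f ∈ Submodule.span k
        {mo : MvPolynomial Q.Arrow k | ∃ u : Q.Arrow →₀ ℕ,
          (↑u : Q.Arrow → ℕ) ∈ Q.USet β r ∧ mo = MvPolynomial.monomial u (1 : k)} :=
  semigroup_ring_U_is_toric_general β r k T E1 E2 hend hcov
end
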